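/- arXiv:2006.15033 — 5 statements merged into one kernel-verified Lean document; each statement's English description precedes it below -/
import Mathlib

section
/- Let p(ξ) := q(ξ₁)·(ξ₁² − 1, ξ₁ξ₂ − iξ₃, ξ₁ξ₃ + iξ₂) with q(t) := (1/8)√(15/π)·(1 + √7·i·t). Then for every ξ ∈ ℝ³ with |ξ| = 1, one has i ξ × p(ξ) = p(ξ); that is, p(ξ) lies in the kernel of the map V ↦ V − iξ × V. -/
open Complex

/-- `q(t) := (1/8)√(15/π)(1 + √7 i t)`. -/
noncomputable def qfun (t : ℝ) : ℂ :=
  (1 / 8 : ℂ) * (Real.sqrt (15 / Real.pi) : ℂ) * (1 + (Real.sqrt 7 : ℂ) * I * (t : ℂ))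

/-- `p(ξ) := q(ξ₁)(ξ₁² − 1, ξ₁ξ₂ − iξ₃, ξ₁ξ₃ + iξ₂)`. -/
noncomputable def pfun (ξ : Fin 3 → ℝ) : Fin 3 → ℂ :=
  fun j =>
    qfun (ξ 0) *
      ![(ξ 0 : ℂ) ^ 2 - 1, (ξ 0 : ℂ) * (ξ 1 : ℂ) - I * (ξ 2 : ℂ),
        (ξ 0 : ℂ) * (ξ 2 : ℂ) + I * (ξ 1 : ℂ)] j

/-- For every unit vector `ξ ∈ ℝ³`, one has `i ξ × p(ξ) = p(ξ)`, i.e. `p(ξ)` lies in the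
kernel of `V ↦ V − iξ × V` (with the complex-bilinear cross product). -/
theorem stmt1 (ξ : Fin 3 → ℝ) (hξ : ξ 0 ^ 2 + ξ 1 ^ 2 + ξ 2 ^ 2 = 1) :
    I • crossProduct (fun i => (ξ i : ℂ)) (pfun ξ) = pfun ξ := by
  have h : (ξ 0:ℂ)^2 + (ξ 1:ℂ)^2 + (ξ 2:ℂ)^2 = 1 := by exact_mod_cast hξ
  have hI : (I:ℂ)^2 = -1 := Complex.I_sq
  funext j
  fin_cases j
  · simp [crossProduct, pfun, qfun]
    linear_combination ((Real.sqrt 15:ℂ) * ((Real.sqrt Real.pi:ℂ))⁻¹ * (1/8)) *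
        (((ξ 1:ℂ)^2 + (ξ 2:ℂ)^2) * (1 + (Real.sqrt 7:ℂ) * I * (ξ 0:ℂ)) * hI
          - (1 + (Real.sqrt 7:ℂ) * I * (ξ 0:ℂ)) * h)
  · simp [crossProduct, pfun, qfun]
    linear_combination (-(Real.sqrt 15:ℂ) * ((Real.sqrt Real.pi:ℂ))⁻¹ * (1/8)) *
        ((ξ 0:ℂ) * (ξ 1:ℂ) * (1 + (Real.sqrt 7:ℂ) * I * (ξ 0:ℂ)) * hI)
  · simp [crossProduct, pfun, qfun]
    linear_combination (-(Real.sqrt 15:ℂ) * ((Real.sqrt Real.pi:ℂ))⁻¹ * (1/8)) *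
        ((ξ 0:ℂ) * (ξ 2:ℂ) * (1 + (Real.sqrt 7:ℂ) * I * (ξ 0:ℂ)) * hI)
end

section
/- For every unit vector ξ ∈ ℝ³ that is not one of the poles (±1,0,0), the kernel of the linear map M_ξ : ℂ³ → ℂ³, M_ξ V = V − iξ × V, is the one-dimensional complex span of the vector p(ξ). -/
open Complex

/-- For a unit vector `ξ` which is not one of the poles `(±1,0,0)`, the kernel of
`M_ξ : V ↦ V − iξ × V` on `ℂ³` is the one-dimensional complex span of `p(ξ)`. -/
theorem stmt3 (ξ : Fin 3 → ℝ) (hξ : ξ 0 ^ 2 + ξ 1 ^ 2 + ξ 2 ^ 2 = 1)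
    (hpole : ξ ≠ ![1, 0, 0] ∧ ξ ≠ ![-1, 0, 0]) :
    {V : Fin 3 → ℂ | V - I • crossProduct (fun i => (ξ i : ℂ)) V = 0} =
      ↑(Submodule.span ℂ {pfun ξ}) ∧ pfun ξ ≠ 0 := by
  have hsum : ((ξ 0 : ℂ)) ^ 2 + (ξ 1 : ℂ) ^ 2 + (ξ 2 : ℂ) ^ 2 = 1 := by exact_mod_cast hξ
  have ha2 : (ξ 0) ^ 2 ≠ 1 := by
    intro h
    have hb0 : ξ 1 = 0 := by nlinarith [sq_nonneg (ξ 1), sq_nonneg (ξ 2)]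
    have hc0 : ξ 2 = 0 := by nlinarith [sq_nonneg (ξ 1), sq_nonneg (ξ 2)]
    have hfac : (ξ 0 - 1) * (ξ 0 + 1) = 0 := by nlinarith
    rcases mul_eq_zero.mp hfac with h1 | h1
    · exact hpole.1 (funext fun j => by fin_cases j <;> simp_all <;> linarith)
    · exact hpole.2 (funext fun j => by fin_cases j <;> simp_all <;> linarith)
  have haC : ((ξ 0 : ℂ)) ^ 2 ≠ 1 := by
    intro h; exact ha2 (by exact_mod_cast h)
  have hq : qfun (ξ 0) ≠ 0 := by
    unfold qfun
    refine mul_ne_zero (mul_ne_zero (by norm_num) ?_) ?_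
    · exact_mod_cast Real.sqrt_ne_zero'.mpr (by positivity)
    · intro h
      have := congrArg Complex.re h
      simp [Complex.add_re, Complex.mul_re] at this
  have hp0 : pfun ξ 0 ≠ 0 := by
    unfold pfun
    simp only [Matrix.cons_val_zero]
    exact mul_ne_zero hq (sub_ne_zero.mpr haC)
  have hpne : pfun ξ ≠ 0 := fun h => hp0 (by rw [h]; rfl)
  refine ⟨?_, hpne⟩
  ext V
  simp only [Set.mem_setOf_eq, SetLike.mem_coe, Submodule.mem_span_singleton]
  constructor
  · intro hV
    have h1 := congrFun hV 1
    have h2 := congrFun hV 2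
    simp only [Pi.sub_apply, Pi.smul_apply, smul_eq_mul, Pi.zero_apply, crossProduct,
      LinearMap.mk₂_apply, Matrix.cons_val_zero, Matrix.cons_val_one, Matrix.head_cons,
      Matrix.cons_val_two, Matrix.tail_cons] at h1 h2
    refine ⟨V 0 / pfun ξ 0, funext fun j => ?_⟩
    have key0 : V 0 * pfun ξ 0 = V 0 * pfun ξ 0 := rfl
    have key1 : V 0 * pfun ξ 1 = V 1 * pfun ξ 0 := by
      simp only [pfun, Matrix.cons_val_one, Matrix.head_cons, Matrix.cons_val_zero]
      linear_combination qfun (ξ 0) * h1 - qfun (ξ 0) * I * (ξ 0 : ℂ) * h2 +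
        (qfun (ξ 0) * (ξ 0 : ℂ) * (ξ 1 : ℂ) * V 0 -
          qfun (ξ 0) * (ξ 0 : ℂ) ^ 2 * V 1) * Complex.I_sq
    have key2 : V 0 * pfun ξ 2 = V 2 * pfun ξ 0 := by
      simp only [pfun, Matrix.cons_val_two, Matrix.tail_cons, Matrix.head_cons,
        Matrix.cons_val_zero]
      linear_combination qfun (ξ 0) * h2 + qfun (ξ 0) * I * (ξ 0 : ℂ) * h1 +
        (qfun (ξ 0) * (ξ 0 : ℂ) * (ξ 2 : ℂ) * V 0 -
          qfun (ξ 0) * (ξ 0 : ℂ) ^ 2 * V 2) * Complex.I_sq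
    rw [Pi.smul_apply, smul_eq_mul, div_mul_eq_mul_div, div_eq_iff hp0]
    fin_cases j
    · exact key0
    · exact key1
    · exact key2
  · rintro ⟨t, rfl⟩
    have e0 : (t • pfun ξ - I • crossProduct (fun i => (ξ i : ℂ)) (t • pfun ξ)) 0 = 0 := by
      simp only [Pi.sub_apply, Pi.smul_apply, smul_eq_mul, crossProduct,
        LinearMap.mk₂_apply, Matrix.cons_val_zero, Matrix.cons_val_one, Matrix.head_cons,
        Matrix.cons_val_two, Matrix.tail_cons, pfun]
      linear_combination t * qfun (ξ 0) * hsum -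
        t * qfun (ξ 0) * ((ξ 1 : ℂ) ^ 2 + (ξ 2 : ℂ) ^ 2) * Complex.I_sq
    have e1 : (t • pfun ξ - I • crossProduct (fun i => (ξ i : ℂ)) (t • pfun ξ)) 1 = 0 := by
      simp only [Pi.sub_apply, Pi.smul_apply, smul_eq_mul, crossProduct,
        LinearMap.mk₂_apply, Matrix.cons_val_zero, Matrix.cons_val_one, Matrix.head_cons,
        Matrix.cons_val_two, Matrix.tail_cons, pfun]
      linear_combination t * qfun (ξ 0) * (ξ 0 : ℂ) * (ξ 1 : ℂ) * Complex.I_sq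
    have e2 : (t • pfun ξ - I • crossProduct (fun i => (ξ i : ℂ)) (t • pfun ξ)) 2 = 0 := by
      simp only [Pi.sub_apply, Pi.smul_apply, smul_eq_mul, crossProduct,
        LinearMap.mk₂_apply, Matrix.cons_val_zero, Matrix.cons_val_one, Matrix.head_cons,
        Matrix.cons_val_two, Matrix.tail_cons, pfun]
      linear_combination t * qfun (ξ 0) * (ξ 0 : ℂ) * (ξ 2 : ℂ) * Complex.I_sq
    funext j
    fin_cases j
    · exact e0
    · exact e1
    · exact e2
end

section
/- Let p(ξ) and p̃(ξ) := q(ξ₂)·(ξ₁ξ₂ + iξ₃, ξ₂² − 1, ξ₂ξ₃ − iξ₁) be the two complex vector fields on the unit sphere. Then p(ξ) × p̃(ξ) = 0 for all ξ with |ξ| = 1. -/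
open Complex

/-- `p̃(ξ) := q(ξ₂)(ξ₁ξ₂ + iξ₃, ξ₂² − 1, ξ₂ξ₃ − iξ₁)`. -/
noncomputable def ptilde (ξ : Fin 3 → ℝ) : Fin 3 → ℂ :=
  fun j =>
    qfun (ξ 1) *
      ![(ξ 0 : ℂ) * (ξ 1 : ℂ) + I * (ξ 2 : ℂ), (ξ 1 : ℂ) ^ 2 - 1,
        (ξ 1 : ℂ) * (ξ 2 : ℂ) - I * (ξ 0 : ℂ)] j

/-- On the unit sphere, `p(ξ) × p̃(ξ) = 0` (complex-bilinear cross product). -/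
theorem stmt4 (ξ : Fin 3 → ℝ) (hξ : ξ 0 ^ 2 + ξ 1 ^ 2 + ξ 2 ^ 2 = 1) :
    crossProduct (pfun ξ) (ptilde ξ) = 0 := by
  have h : (ξ 0 : ℂ) ^ 2 + (ξ 1 : ℂ) ^ 2 + (ξ 2 : ℂ) ^ 2 = 1 := by
    exact_mod_cast congrArg (Complex.ofReal ·) hξ
  funext i
  fin_cases i <;>
    simp [crossProduct, pfun, ptilde, Fin.isValue]
  · linear_combination (-I * (ξ 1 : ℂ) * qfun (ξ 0) * qfun (ξ 1)) * h + (qfun (ξ 0) * (ξ 0 : ℂ) * (ξ 2 : ℂ) * qfun (ξ 1)) * Complex.I_sq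
  · linear_combination (I * (ξ 0 : ℂ) * qfun (ξ 0) * qfun (ξ 1)) * h + (qfun (ξ 0) * (ξ 2 : ℂ) * (ξ 1 : ℂ) * qfun (ξ 1)) * Complex.I_sq
  · linear_combination (-(qfun (ξ 0) * qfun (ξ 1))) * h + (qfun (ξ 0) * qfun (ξ 1) * (ξ 2 : ℂ) ^ 2) * Complex.I_sq
end

section
/- With p(ξ) := q(ξ₁)·(ξ₁² − 1, ξ₁ξ₂ − iξ₃, ξ₁ξ₃ + iξ₂) and q(t) := (1/8)√(15/π)(1 + √7 i t), one has ∫_{S²} p_j(ξ) · conj(p_k(ξ)) dσ(ξ) = δ_{jk} for all j, k ∈ {1, 2, 3}. -/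
/-!
The Gaussian `exp (-‖x‖²)` on `ℝⁿ` is both a product of one-variable Gaussians and a radial
function. Integrating a monomial against it in Cartesian and in polar coordinates gives
`∫_{S^{n-1}} ∏ ξᵢ^αᵢ · Γ((|α| + n)/2) / 2 = ∏ ∫_ℝ t^αᵢ e^{-t²}`, so the moments vanish unless
every `αᵢ` is even and are ratios of half-integer Gamma values otherwise; on `S²` this is
`4π ∏ (αᵢ - 1)‼ / (|α| + 1)‼`. Since `|q(t)|² = 15 (1 + 7t²) / (64π)`, each entry of the Gram
matrix of `p` is a finite combination of such moments.
-/

open MeasureTheory Complex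

open Set Metric
open scoped ComplexConjugate Nat

namespace MeasureTheory

variable {E F : Type*} [NormedAddCommGroup E] [NormedSpace ℝ E] [MeasurableSpace E]
  [NormedAddCommGroup F] [NormedSpace ℝ F]

theorem Measure.integral_volumeIoiPow (k : ℕ) (f : ℝ → F) :
    ∫ r, f r ∂Measure.volumeIoiPow k = ∫ r in Ioi (0 : ℝ), r ^ k • f r := by
  simp only [Measure.volumeIoiPow, ENNReal.ofReal]
  rw [integral_withDensity_eq_integral_smul (measurable_subtype_coe.pow_const _).real_toNNReal,
    integral_subtype_comap measurableSet_Ioi fun r ↦ Real.toNNReal (r ^ k) • f r]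
  refine setIntegral_congr_fun measurableSet_Ioi fun r hr ↦ ?_
  rw [NNReal.smul_def, Real.coe_toNNReal _ (pow_nonneg hr.out.le _)]

theorem integral_eq_integral_toSphere_prod [Nontrivial E] (μ : Measure E) [FiniteDimensional ℝ E]
    [BorelSpace E] [μ.IsAddHaarMeasure] (f : E → F) :
    ∫ x, f x ∂μ = ∫ p, f ((p.2 : ℝ) • (p.1 : E))
      ∂μ.toSphere.prod (.volumeIoiPow (Module.finrank ℝ E - 1)) := by
  calc ∫ x, f x ∂μ = ∫ x : ({0}ᶜ : Set E), f x ∂μ.comap (↑) := by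
        rw [integral_subtype_comap (measurableSet_singleton _).compl f, restrict_compl_singleton]
    _ = _ := by
      rw [← μ.measurePreserving_homeomorphUnitSphereProd.integral_comp
        (Homeomorph.measurableEmbedding _) (fun p ↦ f ((p.2 : ℝ) • (p.1 : E)))]
      refine integral_congr_ae (.of_forall fun x ↦ ?_)
      have hx : ‖(x : E)‖ ≠ 0 := norm_ne_zero_iff.2 x.2
      simp [smul_smul, hx]

end MeasureTheory

theorem integral_Ioi_pow_mul_exp_neg_sq (k : ℕ) :
    ∫ x in Ioi (0 : ℝ), x ^ k * Real.exp (-x ^ 2) = Real.Gamma ((k + 1) / 2) / 2 := by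
  have h := integral_rpow_mul_exp_neg_rpow (p := 2) (q := k) two_pos
    (by linarith [k.cast_nonneg (α := ℝ)])
  simp only [Real.rpow_natCast, Real.rpow_two] at h
  rw [h]
  ring

theorem integral_pow_mul_exp_neg_sq_of_odd {k : ℕ} (hk : Odd k) :
    ∫ x : ℝ, x ^ k * Real.exp (-x ^ 2) = 0 := by
  have h := integral_neg_eq_self (fun x : ℝ ↦ x ^ k * Real.exp (-x ^ 2)) volume
  simp only [hk.neg_pow, even_two.neg_pow, neg_mul, integral_neg] at h
  linarith

theorem integral_pow_mul_exp_neg_sq_of_even {k : ℕ} (hk : Even k) :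
    ∫ x : ℝ, x ^ k * Real.exp (-x ^ 2) = Real.Gamma ((k + 1) / 2) := by
  have h := integral_comp_abs (f := fun x : ℝ ↦ x ^ k * Real.exp (-x ^ 2))
  simp only [hk.pow_abs, sq_abs, integral_Ioi_pow_mul_exp_neg_sq] at h
  rw [h]
  ring

theorem Real.Gamma_two_mul_add_one_div_two (k : ℕ) :
    Real.Gamma (((2 * k : ℕ) + 1) / 2) = (2 * k - 1 : ℕ)‼ * √Real.pi / 2 ^ k := by
  rw [← Real.Gamma_nat_add_half]
  congr 1
  push_cast
  ring

section SphereMoment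

variable {n : ℕ}

noncomputable def sphereMoment (α : Fin n → ℕ) : ℝ :=
  ∫ ξ : sphere (0 : EuclideanSpace ℝ (Fin n)) 1,
    ∏ i, (ξ : EuclideanSpace ℝ (Fin n)) i ^ α i ∂volume.toSphere

theorem integral_prod_pow_mul_exp_neg_norm_sq (α : Fin n → ℕ) :
    ∫ x : EuclideanSpace ℝ (Fin n), (∏ i, x i ^ α i) * Real.exp (-‖x‖ ^ 2) =
      ∏ i, ∫ t : ℝ, t ^ α i * Real.exp (-t ^ 2) := by
  have h_split (x : EuclideanSpace ℝ (Fin n)) : (∏ i, x i ^ α i) * Real.exp (-‖x‖ ^ 2) =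
      ∏ i, x.ofLp i ^ α i * Real.exp (-x.ofLp i ^ 2) := by
    rw [EuclideanSpace.real_norm_sq_eq, ← Finset.sum_neg_distrib, Real.exp_sum,
      Finset.prod_mul_distrib]
  simp_rw [h_split]
  exact ((PiLp.volume_preserving_ofLp (Fin n)).integral_comp
    (MeasurableEquiv.toLp 2 (Fin n → ℝ)).symm.measurableEmbedding
    (fun y ↦ ∏ i, y i ^ α i * Real.exp (-y i ^ 2))).trans
    (integral_fintype_prod_eq_prod (fun i t ↦ t ^ α i * Real.exp (-t ^ 2)))

theorem integral_prod_pow_mul_exp_neg_norm_sq_eq_sphereMoment [NeZero n] (α : Fin n → ℕ) :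
    ∫ x : EuclideanSpace ℝ (Fin n), (∏ i, x i ^ α i) * Real.exp (-‖x‖ ^ 2) =
      sphereMoment α * (Real.Gamma ((∑ i, α i + n) / 2) / 2) := by
  have h_polar (ξ : sphere (0 : EuclideanSpace ℝ (Fin n)) 1) (r : Ioi (0 : ℝ)) :
      (∏ i, ((r : ℝ) • (ξ : EuclideanSpace ℝ (Fin n))) i ^ α i) *
          Real.exp (-‖(r : ℝ) • (ξ : EuclideanSpace ℝ (Fin n))‖ ^ 2) =
        (∏ i, (ξ : EuclideanSpace ℝ (Fin n)) i ^ α i) *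
          ((r : ℝ) ^ (∑ i, α i) * Real.exp (-(r : ℝ) ^ 2)) := by
    simp only [PiLp.smul_apply, smul_eq_mul, mul_pow, Finset.prod_mul_distrib,
      Finset.prod_pow_eq_pow_sum, norm_smul, norm_eq_of_mem_sphere,
      Real.norm_of_nonneg r.2.out.le, mul_one]
    ring
  rw [integral_eq_integral_toSphere_prod, finrank_euclideanSpace_fin]
  simp_rw [h_polar]
  rw [integral_prod_mul (fun ξ : sphere (0 : EuclideanSpace ℝ (Fin n)) 1 ↦
      ∏ i, (ξ : EuclideanSpace ℝ (Fin n)) i ^ α i)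
    (fun r : Ioi (0 : ℝ) ↦ (r : ℝ) ^ (∑ i, α i) * Real.exp (-(r : ℝ) ^ 2)),
    Measure.integral_volumeIoiPow _ (fun r ↦ r ^ (∑ i, α i) * Real.exp (-r ^ 2))]
  simp_rw [smul_eq_mul, ← mul_assoc, ← pow_add]
  rw [integral_Ioi_pow_mul_exp_neg_sq]
  congr 3
  push_cast [Nat.one_le_iff_ne_zero.2 (NeZero.ne n)]
  ring

theorem sphereMoment_eq [NeZero n] (α : Fin n → ℕ) :
    sphereMoment α = 2 * (∏ i, ∫ t : ℝ, t ^ α i * Real.exp (-t ^ 2)) /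
      Real.Gamma ((∑ i, α i + n) / 2) := by
  have hΓ : 0 < Real.Gamma ((∑ i, α i + n) / 2) :=
    Real.Gamma_pos_of_pos (by have := NeZero.pos n; positivity)
  rw [eq_div_iff hΓ.ne', ← integral_prod_pow_mul_exp_neg_norm_sq,
    integral_prod_pow_mul_exp_neg_norm_sq_eq_sphereMoment]
  ring

theorem sphereMoment_eq_zero_of_odd [NeZero n] (α : Fin n → ℕ) {i : Fin n} (hi : Odd (α i)) :
    sphereMoment α = 0 := by
  rw [sphereMoment_eq, Finset.prod_eq_zero (Finset.mem_univ i)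
    (integral_pow_mul_exp_neg_sq_of_odd hi)]
  simp

theorem sphereMoment_eq_of_even [NeZero n] (α : Fin n → ℕ) (hα : ∀ i, Even (α i)) :
    sphereMoment α =
      2 * (∏ i, Real.Gamma ((α i + 1) / 2)) / Real.Gamma ((∑ i, α i + n) / 2) := by
  simp_rw [sphereMoment_eq, integral_pow_mul_exp_neg_sq_of_even (hα _)]

/-- The truncated subtraction is harmless: `(0 - 1)‼ = 0‼ = 1` plays the role of `(-1)‼`. -/
theorem sphereMoment_three (a b c : ℕ) :
    sphereMoment ![a, b, c] = if Even a ∧ Even b ∧ Even c then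
      4 * Real.pi * ((a - 1)‼ * (b - 1)‼ * (c - 1)‼ : ℕ) / (a + b + c + 1 : ℕ)‼ else 0 := by
  split_ifs with h
  · obtain ⟨⟨a, rfl⟩, ⟨b, rfl⟩, ⟨c, rfl⟩⟩ :=
      And.imp Even.two_dvd (And.imp Even.two_dvd Even.two_dvd) h
    rw [sphereMoment_eq_of_even (n := 3) _ (by simp [Fin.forall_fin_succ, h])]
    simp only [Fin.prod_univ_three, Fin.sum_univ_three, Matrix.cons_val_zero,
      Matrix.cons_val_one, Matrix.cons_val_two, Matrix.tail_cons, Matrix.head_cons]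
    have hs : ((2 * a + 2 * b + 2 * c : ℕ) + (3 : ℕ) : ℝ) / 2 = (a + b + c : ℕ) + 1 + 1 / 2 := by
      push_cast
      ring
    rw [Real.Gamma_two_mul_add_one_div_two, Real.Gamma_two_mul_add_one_div_two,
      Real.Gamma_two_mul_add_one_div_two, hs, Real.Gamma_nat_add_one_add_half,
      show 2 * a + 2 * b + 2 * c + 1 = 2 * (a + b + c) + 1 by ring]
    have hπ : √Real.pi ^ 2 = Real.pi := Real.sq_sqrt Real.pi_nonneg
    have hπ0 : √Real.pi ≠ 0 := (Real.sqrt_pos.2 Real.pi_pos).ne'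
    field_simp
    push_cast
    rw [hπ]
    ring
  · simp only [not_and_or, Nat.not_even_iff_odd] at h
    rcases h with h | h | h
    exacts [sphereMoment_eq_zero_of_odd _ (i := 0) h, sphereMoment_eq_zero_of_odd _ (i := 1) h,
      sphereMoment_eq_zero_of_odd _ (i := 2) h]

theorem integral_sum_mul_prod_pow {m : ℕ} (a : Fin m → ℂ) (α : Fin m → Fin n → ℕ) :
    ∫ ξ : sphere (0 : EuclideanSpace ℝ (Fin n)) 1,
        ∑ l, a l * ∏ i, ((ξ : EuclideanSpace ℝ (Fin n)) i : ℂ) ^ α l i ∂volume.toSphere =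
      ∑ l, a l * sphereMoment (α l) := by
  have hcont (l : Fin m) : Continuous fun ξ : sphere (0 : EuclideanSpace ℝ (Fin n)) 1 ↦
      a l * ∏ i, ((ξ : EuclideanSpace ℝ (Fin n)) i : ℂ) ^ α l i := by
    fun_prop
  rw [integral_finsetSum _ fun l _ ↦ (hcont l).integrable_of_hasCompactSupport
    (.of_compactSpace _)]
  refine Finset.sum_congr rfl fun l _ ↦ ?_
  rw [integral_const_mul, sphereMoment, ← integral_complex_ofReal]
  push_cast
  rfl

end SphereMoment

noncomputable def pPoly (x : Fin 3 → ℝ) : Fin 3 → ℂ :=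
  ![(x 0 : ℂ) ^ 2 - 1, (x 0 : ℂ) * (x 1 : ℂ) - I * (x 2 : ℂ),
    (x 0 : ℂ) * (x 2 : ℂ) + I * (x 1 : ℂ)]

theorem qfun_mul_conj (t : ℝ) :
    qfun t * conj (qfun t) = 15 / (64 * Real.pi) * (1 + 7 * (t : ℂ) ^ 2) := by
  have h7 : ((√7 : ℝ) : ℂ) ^ 2 = 7 := by
    norm_cast
    simp
  have h15 : ((√(15 / Real.pi) : ℝ) : ℂ) ^ 2 = 15 / Real.pi := by
    norm_cast
    rw [Real.sq_sqrt (by positivity)]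
  simp only [qfun, map_mul, map_add, map_one, conj_ofReal, conj_I, map_div₀, map_ofNat]
  linear_combination (1 - ((√7 : ℝ) : ℂ) ^ 2 * I ^ 2 * t ^ 2) / 64 * h15
    - 15 / (64 * Real.pi) * I ^ 2 * t ^ 2 * h7 - 105 / (64 * Real.pi) * t ^ 2 * I_sq

theorem pfun_mul_conj_pfun (x : Fin 3 → ℝ) (j k : Fin 3) :
    pfun x j * conj (pfun x k) =
      15 / (64 * Real.pi) * ((1 + 7 * (x 0 : ℂ) ^ 2) * (pPoly x j * conj (pPoly x k))) := by
  calc pfun x j * conj (pfun x k)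
      = qfun (x 0) * conj (qfun (x 0)) * (pPoly x j * conj (pPoly x k)) := by
        simp only [pfun, pPoly, map_mul]
        ring
    _ = _ := by
        rw [qfun_mul_conj]
        ring

noncomputable def pGram (j k : Fin 3) : ℂ :=
  ∫ ξ : sphere (0 : EuclideanSpace ℝ (Fin 3)) 1,
    pfun (fun i => (ξ : EuclideanSpace ℝ (Fin 3)) i) j *
      conj (pfun (fun i => (ξ : EuclideanSpace ℝ (Fin 3)) i) k) ∂volume.toSphere

theorem pGram_comm (j k : Fin 3) : pGram k j = conj (pGram j k) := by
  rw [pGram, pGram, ← integral_conj]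
  simp_rw [map_mul, conj_conj, mul_comm]

theorem pGram_eq_sum {m : ℕ} (j k : Fin 3) (a : Fin m → ℂ) (α : Fin m → Fin 3 → ℕ)
    (h : ∀ x : Fin 3 → ℝ, (1 + 7 * (x 0 : ℂ) ^ 2) * (pPoly x j * conj (pPoly x k)) =
      ∑ l, a l * ∏ i, (x i : ℂ) ^ α l i) :
    pGram j k = 15 / (64 * Real.pi) * ∑ l, a l * sphereMoment (α l) := by
  simp_rw [pGram, pfun_mul_conj_pfun, h, integral_const_mul, integral_sum_mul_prod_pow]

theorem pGram_zero_zero : pGram 0 0 = 1 := by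
  rw [pGram_eq_sum 0 0 ![7, -13, 5, 1] ![![6, 0, 0], ![4, 0, 0], ![2, 0, 0], ![0, 0, 0]]
    fun x ↦ by
      simp only [pPoly, Matrix.cons_val, map_sub, map_pow, conj_ofReal, map_one,
        Fin.prod_univ_three, Fin.sum_univ_four]
      ring]
  simp only [Fin.sum_univ_four, Matrix.cons_val]
  norm_num [sphereMoment_three, Nat.doubleFactorial, Nat.even_iff]
  field_simp
  ring

theorem pGram_one_one : pGram 1 1 = 1 := by
  rw [pGram_eq_sum 1 1 ![7, 1, 7, 1] ![![4, 2, 0], ![2, 2, 0], ![2, 0, 2], ![0, 0, 2]]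
    fun x ↦ by
      simp only [pPoly, Matrix.cons_val, map_sub, map_mul, conj_ofReal, conj_I,
        Fin.prod_univ_three, Fin.sum_univ_four]
      linear_combination -(1 + 7 * (x 0 : ℂ) ^ 2) * (x 2 : ℂ) ^ 2 * I_sq]
  simp only [Fin.sum_univ_four, Matrix.cons_val]
  norm_num [sphereMoment_three, Nat.doubleFactorial, Nat.even_iff]
  field_simp
  ring

theorem pGram_two_two : pGram 2 2 = 1 := by
  rw [pGram_eq_sum 2 2 ![7, 1, 7, 1] ![![4, 0, 2], ![2, 0, 2], ![2, 2, 0], ![0, 2, 0]]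
    fun x ↦ by
      simp only [pPoly, Matrix.cons_val, map_add, map_mul, conj_ofReal, conj_I,
        Fin.prod_univ_three, Fin.sum_univ_four]
      linear_combination -(1 + 7 * (x 0 : ℂ) ^ 2) * (x 1 : ℂ) ^ 2 * I_sq]
  simp only [Fin.sum_univ_four, Matrix.cons_val]
  norm_num [sphereMoment_three, Nat.doubleFactorial, Nat.even_iff]
  field_simp
  ring

theorem pGram_zero_one : pGram 0 1 = 0 := by
  rw [pGram_eq_sum 0 1 ![7, -6, -1, 7 * I, -6 * I, -I]
    ![![5, 1, 0], ![3, 1, 0], ![1, 1, 0], ![4, 0, 1], ![2, 0, 1], ![0, 0, 1]]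
    fun x ↦ by
      simp only [pPoly, Matrix.cons_val, map_sub, map_mul, conj_ofReal, conj_I,
        Fin.prod_univ_three, Fin.sum_univ_six]
      ring]
  simp only [Fin.sum_univ_six, Matrix.cons_val]
  norm_num [sphereMoment_three, Nat.even_iff]

theorem pGram_zero_two : pGram 0 2 = 0 := by
  rw [pGram_eq_sum 0 2 ![7, -6, -1, -7 * I, 6 * I, I]
    ![![5, 0, 1], ![3, 0, 1], ![1, 0, 1], ![4, 1, 0], ![2, 1, 0], ![0, 1, 0]]
    fun x ↦ by
      simp only [pPoly, Matrix.cons_val, map_add, map_mul, conj_ofReal, conj_I,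
        Fin.prod_univ_three, Fin.sum_univ_six]
      ring]
  simp only [Fin.sum_univ_six, Matrix.cons_val]
  norm_num [sphereMoment_three, Nat.even_iff]

theorem pGram_one_two : pGram 1 2 = 0 := by
  rw [pGram_eq_sum 1 2 ![7, -6, -1, -7 * I, -I, -7 * I, -I]
    ![![4, 1, 1], ![2, 1, 1], ![0, 1, 1], ![3, 2, 0], ![1, 2, 0], ![3, 0, 2], ![1, 0, 2]]
    fun x ↦ by
      simp only [pPoly, Matrix.cons_val, map_add, map_mul, conj_ofReal, conj_I,
        Fin.prod_univ_three, Fin.sum_univ_seven]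
      linear_combination (1 + 7 * (x 0 : ℂ) ^ 2) * (x 1 : ℂ) * (x 2 : ℂ) * I_sq]
  simp only [Fin.sum_univ_seven, Matrix.cons_val]
  norm_num [sphereMoment_three, Nat.even_iff]

/-- `∫_{S²} p_j(ξ) conj(p_k(ξ)) dσ(ξ) = δ_{jk}`, where `dσ` is the surface measure on the
unit sphere of `ℝ³` (realized as `volume.toSphere`). -/
theorem stmt6 (j k : Fin 3) :
    ∫ ξ : Metric.sphere (0 : EuclideanSpace ℝ (Fin 3)) 1,
        pfun (fun i => (ξ : EuclideanSpace ℝ (Fin 3)) i) j *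
          (starRingEnd ℂ) (pfun (fun i => (ξ : EuclideanSpace ℝ (Fin 3)) i) k)
        ∂(volume.toSphere) =
      if j = k then 1 else 0 := by
  change pGram j k = _
  fin_cases j <;> fin_cases k <;>
    simp [pGram_zero_zero, pGram_one_one, pGram_two_two, pGram_zero_one, pGram_zero_two,
      pGram_one_two, pGram_comm 0 1, pGram_comm 0 2, pGram_comm 1 2]
end

section
/- Let Γ ⊂ ℝ³ be a set all of whose connected components are closed, and for y ∈ ℝ³, r > 0 let N(y, r; Γ) denote the number of connected components of Γ contained in the open ball B_r(y). Then y ↦ N(y, r; Γ) is measurable (indeed lower semicontinuous), and for any 0 < r < R, ∫_{B_{R−r}} N(y, r; Γ)/vol(B_r) dy ≤ N(0, R; Γ). -/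
open MeasureTheory Metric
open scoped ENNReal

/-- The set of connected components of `Γ`. -/
def components (Γ : Set (EuclideanSpace ℝ (Fin 3))) : Set (Set (EuclideanSpace ℝ (Fin 3))) :=
  {γ | ∃ x ∈ Γ, γ = connectedComponentIn Γ x}

/-- The number of connected components of `Γ` contained in the open ball `B_r(y)`,
as a value in `ℝ≥0∞`. -/
noncomputable def compCount (Γ : Set (EuclideanSpace ℝ (Fin 3))) (r : ℝ)
    (y : EuclideanSpace ℝ (Fin 3)) : ENNReal :=
  (({γ ∈ components Γ | γ ⊆ ball y r}).encard : ENNReal)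

private lemma comp_closed_nonempty {Γ : Set (EuclideanSpace ℝ (Fin 3))}
    (hclosed : ∀ x ∈ Γ, IsClosed (connectedComponentIn Γ x)) {γ : Set (EuclideanSpace ℝ (Fin 3))}
    (hγ : γ ∈ components Γ) : IsClosed γ ∧ γ.Nonempty := by
  obtain ⟨x, hx, rfl⟩ := hγ
  exact ⟨hclosed x hx, ⟨x, mem_connectedComponentIn hx⟩⟩

private lemma exists_eps {γ : Set (EuclideanSpace ℝ (Fin 3))} (hc : IsCompact γ)
    (hne : γ.Nonempty) {y : EuclideanSpace ℝ (Fin 3)} {r : ℝ} (h : γ ⊆ ball y r) :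
    ∃ ε > 0, ∀ y', dist y' y < ε → γ ⊆ ball y' r := by
  obtain ⟨x₀, hx₀, hmax⟩ := hc.exists_isMaxOn hne
    ((continuous_id.dist continuous_const).continuousOn (s := γ))
  have hx₀r : dist x₀ y < r := mem_ball.mp (h hx₀)
  refine ⟨r - dist x₀ y, by linarith, ?_⟩
  intro y' hy' x hx
  have h1 : dist x y ≤ dist x₀ y := hmax hx
  have h2 : dist x y' ≤ dist x y + dist y y' := dist_triangle ..
  rw [dist_comm y' y] at hy'
  rw [mem_ball]
  linarith

private lemma isOpen_setU {γ : Set (EuclideanSpace ℝ (Fin 3))} (hγ : IsClosed γ) (r : ℝ) :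
    IsOpen {y : EuclideanSpace ℝ (Fin 3) | γ ⊆ ball y r} := by
  rcases γ.eq_empty_or_nonempty with rfl | hne
  · simp only [Set.empty_subset, Set.setOf_true]
    exact isOpen_univ
  · rw [Metric.isOpen_iff]
    intro y hy
    have hcpt : IsCompact γ := (isCompact_closedBall y r).of_isClosed_subset hγ
      ((hy : γ ⊆ ball y r).trans ball_subset_closedBall)
    obtain ⟨ε, hε, hball⟩ := exists_eps hcpt hne hy
    exact ⟨ε, hε, fun y' hy' => hball y' (mem_ball.mp hy')⟩

/-- If all connected components of `Γ ⊂ ℝ³` are closed, then `y ↦ N(y, r; Γ)` is lower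
semicontinuous (in particular measurable) and, for `0 < r < R`,
`∫_{B_{R−r}} N(y, r; Γ) dy ≤ vol(B_r) · N(0, R; Γ)`. -/
theorem stmt10 (Γ : Set (EuclideanSpace ℝ (Fin 3)))
    (hclosed : ∀ x ∈ Γ, IsClosed (connectedComponentIn Γ x))
    (r R : ℝ) (hr : 0 < r) (hrR : r < R) :
    LowerSemicontinuous (compCount Γ r) ∧
    ∫⁻ y in ball (0 : EuclideanSpace ℝ (Fin 3)) (R - r), compCount Γ r y ∂volume ≤
      volume (ball (0 : EuclideanSpace ℝ (Fin 3)) r) *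
        compCount Γ R (0 : EuclideanSpace ℝ (Fin 3)) := by
  classical
  constructor
  · -- Lower semicontinuity
    intro y c hc
    set S := {γ ∈ components Γ | γ ⊆ ball y r} with hSdef
    obtain ⟨F, hFS, hFfin, hcF⟩ : ∃ F ⊆ S, F.Finite ∧ c < (F.encard : ℝ≥0∞) := by
      by_cases hfin : S.Finite
      · exact ⟨S, subset_rfl, hfin, hc⟩
      · obtain ⟨n, hn⟩ := ENNReal.exists_nat_gt hc.ne_top
        obtain ⟨F, hFS, hF⟩ := Set.exists_subset_encard_eq
          (le_top.trans_eq (Set.Infinite.encard_eq hfin).symm : (n : ℕ∞) ≤ S.encard)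
        refine ⟨F, hFS, Set.finite_of_encard_eq_coe hF, ?_⟩
        rw [hF]
        simpa using hn
    have hev : ∀ᶠ y' in nhds y, ∀ γ ∈ F, γ ⊆ ball y' r := by
      rw [Filter.eventually_all_finite hFfin]
      intro γ hγ
      obtain ⟨hcl, _⟩ := comp_closed_nonempty hclosed (hFS hγ).1
      exact (isOpen_setU hcl r).mem_nhds ((hFS hγ).2)
    filter_upwards [hev] with y' hy'
    have hsub : F ⊆ {γ ∈ components Γ | γ ⊆ ball y' r} :=
      fun γ hγ => ⟨(hFS hγ).1, hy' γ hγ⟩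
    exact hcF.trans_le (ENat.toENNReal_le.mpr (Set.encard_mono hsub))
  · -- Integral bound
    set T := {γ ∈ components Γ | γ ⊆ ball (0 : EuclideanSpace ℝ (Fin 3)) R} with hTdef
    by_cases hTfin : T.Finite
    · set Fs := hTfin.toFinset with hFs
      -- choose a point in each component
      have hpt : ∀ γ ∈ Fs, ∃ x, x ∈ γ := by
        intro γ hγ
        rw [hFs, Set.Finite.mem_toFinset] at hγ
        exact (comp_closed_nonempty hclosed hγ.1).2
      have hUopen : ∀ γ ∈ Fs, IsOpen {y : EuclideanSpace ℝ (Fin 3) | γ ⊆ ball y r} := by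
        intro γ hγ
        rw [hFs, Set.Finite.mem_toFinset] at hγ
        exact isOpen_setU (comp_closed_nonempty hclosed hγ.1).1 r
      have key : ∀ y ∈ ball (0 : EuclideanSpace ℝ (Fin 3)) (R - r),
          compCount Γ r y ≤ ∑ γ ∈ Fs,
            Set.indicator {y : EuclideanSpace ℝ (Fin 3) | γ ⊆ ball y r}
              (fun _ => (1 : ℝ≥0∞)) y := by
        intro y hy
        have hsub : {γ ∈ components Γ | γ ⊆ ball y r} ⊆
            ↑(Fs.filter fun γ => γ ⊆ ball y r) := by
          intro γ hγ
          simp only [Finset.coe_filter, Set.mem_setOf_eq, hFs, Set.Finite.mem_toFinset]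
          refine ⟨⟨hγ.1, ?_⟩, hγ.2⟩
          intro x hx
          have h1 : dist x y < r := hγ.2 hx
          have h2 : dist y 0 < R - r := mem_ball.mp hy
          have h3 := dist_triangle x y (0 : EuclideanSpace ℝ (Fin 3))
          rw [mem_ball]
          linarith
        have h4 : ({γ ∈ components Γ | γ ⊆ ball y r}).encard ≤
            ((Fs.filter fun γ => γ ⊆ ball y r).card : ℕ∞) := by
          have := Set.encard_mono hsub
          rwa [Set.encard_coe_eq_coe_finsetCard] at this
        calc compCount Γ r y
            ≤ (((Fs.filter fun γ => γ ⊆ ball y r).card : ℕ∞) : ℝ≥0∞) :=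
              ENat.toENNReal_le.mpr h4
          _ = ((Fs.filter fun γ => γ ⊆ ball y r).card : ℝ≥0∞) := by simp
          _ = ∑ γ ∈ Fs, if γ ⊆ ball y r then (1 : ℝ≥0∞) else 0 := by
              rw [Finset.sum_boole]
          _ = _ := by
              refine Finset.sum_congr rfl fun γ _ => ?_
              rw [Set.indicator_apply]
              rfl
      calc ∫⁻ y in ball (0 : EuclideanSpace ℝ (Fin 3)) (R - r), compCount Γ r y ∂volume
          ≤ ∫⁻ y in ball (0 : EuclideanSpace ℝ (Fin 3)) (R - r), ∑ γ ∈ Fs,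
              Set.indicator {y : EuclideanSpace ℝ (Fin 3) | γ ⊆ ball y r}
                (fun _ => (1 : ℝ≥0∞)) y ∂volume := by
            refine setLIntegral_mono (Finset.measurable_sum _ fun γ hγ => ?_) key
            exact measurable_const.indicator (hUopen γ hγ).measurableSet
        _ = ∑ γ ∈ Fs, ∫⁻ y in ball (0 : EuclideanSpace ℝ (Fin 3)) (R - r),
              Set.indicator {y : EuclideanSpace ℝ (Fin 3) | γ ⊆ ball y r}
                (fun _ => (1 : ℝ≥0∞)) y ∂volume :=
            lintegral_finset_sum _ fun γ hγ =>
              measurable_const.indicator (hUopen γ hγ).measurableSet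
        _ ≤ ∑ γ ∈ Fs, volume (ball (0 : EuclideanSpace ℝ (Fin 3)) r) := by
            refine Finset.sum_le_sum fun γ hγ => ?_
            obtain ⟨x, hx⟩ := hpt γ hγ
            have h1 : ∫⁻ y in ball (0 : EuclideanSpace ℝ (Fin 3)) (R - r),
                Set.indicator {y : EuclideanSpace ℝ (Fin 3) | γ ⊆ ball y r}
                  (fun _ => (1 : ℝ≥0∞)) y ∂volume
                ≤ volume {y : EuclideanSpace ℝ (Fin 3) | γ ⊆ ball y r} := by
              refine (lintegral_indicator_one_le _).trans ?_
              rw [Measure.restrict_apply (hUopen γ hγ).measurableSet]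
              exact measure_mono Set.inter_subset_left
            refine h1.trans ?_
            have h2 : {y : EuclideanSpace ℝ (Fin 3) | γ ⊆ ball y r} ⊆ ball x r := by
              intro y hy
              rw [mem_ball, dist_comm]
              exact mem_ball.mp (hy hx)
            calc volume {y : EuclideanSpace ℝ (Fin 3) | γ ⊆ ball y r}
                ≤ volume (ball x r) := measure_mono h2
              _ = volume (ball (0 : EuclideanSpace ℝ (Fin 3)) r) :=
                  Measure.addHaar_ball_center volume x r
        _ = volume (ball (0 : EuclideanSpace ℝ (Fin 3)) r) *
              compCount Γ R (0 : EuclideanSpace ℝ (Fin 3)) := by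
            rw [Finset.sum_const, nsmul_eq_mul, mul_comm]
            congr 1
            have h5 : compCount Γ R (0 : EuclideanSpace ℝ (Fin 3)) =
                ((T.encard : ℕ∞) : ℝ≥0∞) := rfl
            rw [h5, hTfin.encard_eq_coe_toFinset_card, ENat.toENNReal_coe]
    · have h1 : compCount Γ R (0 : EuclideanSpace ℝ (Fin 3)) = ⊤ := by
        show ((({γ ∈ components Γ | γ ⊆ ball (0 : EuclideanSpace ℝ (Fin 3)) R}).encard :
          ℕ∞) : ℝ≥0∞) = ⊤
        rw [← hTdef, Set.Infinite.encard_eq hTfin]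
        simp
      rw [h1, ENNReal.mul_top (measure_ball_pos volume (0 : EuclideanSpace ℝ (Fin 3)) hr).ne']
      exact le_top
end
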